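/- arXiv:0910.2620 — 2 statements merged into one kernel-verified Lean document; each statement's English description precedes it below -/
import Mathlib

section
/- Let n ≥ 2 and let k be an integer with 1 ≤ k ≤ n-1. There exists a constant C(k,n) such that for all positive integers T, ∑_{a ∈ {1,...,T}ⁿ} ((a₁ + ⋯ + aₙ)/n)ᵏ / (a₁⋯aₙ)^{k/n} ≤ C(k,n)·Tⁿ. -/
open Finset Real

/-!
Bound the numerator crudely: the mean of the coordinates is at most `T`, so it contributes at
most `T ^ k`. What remains, `∑ₐ ∏ᵢ aᵢ ^ (-s)` with `s = k / n < 1`, factorizes as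
`(∑_{x ≤ T} x ^ (-s)) ^ n`, and comparing each `x ^ (-s)` with the increment of
`x ^ (1 - s) / (1 - s)` bounds the inner sum by `T ^ (1 - s) / (1 - s)`. Since `n (1 - s) = n - k`,
the total is at most `(1 - s) ^ (-n) * T ^ n`.
-/

-- Bernoulli's inequality applied to `(M - 1) ^ (1 - s) = M ^ (1 - s) * (1 - 1 / M) ^ (1 - s)`.
lemma one_sub_mul_rpow_neg_le {s M : ℝ} (hs0 : 0 ≤ s) (hs1 : s ≤ 1) (hM : 1 ≤ M) :
    (1 - s) * M ^ (-s) ≤ M ^ (1 - s) - (M - 1) ^ (1 - s) := by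
  have hM0 : 0 < M := one_pos.trans_le hM
  have hinv : -1 ≤ -1 / M := by rw [neg_div, neg_le_neg_iff]; exact div_le_one_of_le₀ hM hM0.le
  have hfactor : (M - 1) ^ (1 - s) = M ^ (1 - s) * (1 + -1 / M) ^ (1 - s) := by
    rw [← mul_rpow hM0.le (by linarith)]
    congr 1
    field_simp
    ring
  have hbernoulli := rpow_one_add_le_one_add_mul_self hinv (by linarith) (by linarith : 1 - s ≤ 1)
  have hneg : M ^ (-s) = M ^ (1 - s) / M := by
    rw [← rpow_sub_one hM0.ne']; ring_nf
  calc (1 - s) * M ^ (-s) = M ^ (1 - s) - M ^ (1 - s) * (1 + (1 - s) * (-1 / M)) := by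
        rw [hneg]; field_simp; ring
    _ ≤ M ^ (1 - s) - (M - 1) ^ (1 - s) := by
        rw [hfactor]
        gcongr

lemma one_sub_mul_sum_Icc_rpow_neg_le {s : ℝ} (hs0 : 0 ≤ s) (hs1 : s ≤ 1) (N : ℕ) :
    (1 - s) * ∑ x ∈ Icc 1 N, (x : ℝ) ^ (-s) ≤ (N : ℝ) ^ (1 - s) := by
  induction N with
  | zero => simpa using rpow_nonneg le_rfl _
  | succ N ih =>
    rw [sum_Icc_succ_top (by omega), mul_add]
    have := one_sub_mul_rpow_neg_le hs0 hs1 (M := N + 1) (by linarith [N.cast_nonneg (α := ℝ)])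
    push_cast
    rw [add_sub_cancel_right] at this
    linarith

lemma sum_div_card_le_of_le {ι : Type*} [Fintype ι] {a : ι → ℝ} {T : ℝ} (hT : 0 ≤ T)
    (haT : ∀ i, a i ≤ T) : (∑ i, a i) / Fintype.card ι ≤ T :=
  div_le_of_le_mul₀ (by positivity) hT <| by
    simpa [mul_comm] using Finset.sum_le_card_nsmul univ a T fun i _ => haT i

lemma mean_pow_div_prod_rpow_le {ι : Type*} [Fintype ι] {a : ι → ℝ} {T : ℝ}
    (ha : ∀ i, 0 < a i) (haT : ∀ i, a i ≤ T) (hT : 0 ≤ T) (k : ℕ) (s : ℝ) :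
    ((∑ i, a i) / Fintype.card ι) ^ k / (∏ i, a i) ^ s ≤ T ^ k * ∏ i, a i ^ (-s) := by
  rw [div_eq_mul_inv, ← rpow_neg (prod_nonneg fun i _ => (ha i).le),
    finsetProd_rpow _ _ fun i _ => (ha i).le]
  gcongr
  · exact rpow_nonneg (prod_nonneg fun i _ => (ha i).le) _
  · exact div_nonneg (sum_nonneg fun i _ => (ha i).le) (by positivity)
  · exact sum_div_card_le_of_le hT haT

lemma pow_mul_rpow_one_sub_div_pow {T : ℝ} (hT : 0 ≤ T) {k n : ℕ} (hkn : k ≤ n) :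
    T ^ k * (T ^ (1 - (k : ℝ) / n)) ^ n = T ^ n := by
  rcases n.eq_zero_or_pos with rfl | hn
  · simp [Nat.le_zero.mp hkn]
  rw [← rpow_mul_natCast hT, show (1 - (k : ℝ) / n) * n = (n - k : ℕ) by
      push_cast [hkn]; field_simp, rpow_natCast, pow_mul_pow_sub _ hkn]

theorem stmt_3_general (n k : ℕ) (hkn : k ≤ n - 1) :
    ∃ C : ℝ, ∀ T : ℕ, 0 < T →
      ∑ a ∈ Fintype.piFinset (fun _ : Fin n => Finset.Icc 1 T),
        ((∑ i, (a i : ℝ)) / n) ^ k / (∏ i, (a i : ℝ)) ^ ((k : ℝ) / n) ≤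
      C * (T : ℝ) ^ n := by
  set s : ℝ := k / n
  have hs0 : 0 ≤ s := by positivity
  have hs1 : s < 1 := by
    rcases n.eq_zero_or_pos with rfl | hn
    · simp [s]
    · rw [div_lt_one (by positivity)]; exact_mod_cast (by omega : k < n)
  refine ⟨((1 - s) ^ n)⁻¹, fun T _ => ?_⟩
  calc _ ≤ ∑ a ∈ Fintype.piFinset (fun _ : Fin n => Icc 1 T),
          (T : ℝ) ^ k * ∏ i, (a i : ℝ) ^ (-s) :=
        sum_le_sum fun a ha => by
          simp only [Fintype.mem_piFinset, mem_Icc] at ha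
          simpa using mean_pow_div_prod_rpow_le (a := fun i => (a i : ℝ))
            (fun i => by exact_mod_cast (ha i).1) (fun i => by exact_mod_cast (ha i).2)
            T.cast_nonneg k s
    _ = T ^ k * (∑ x ∈ Icc 1 T, (x : ℝ) ^ (-s)) ^ n := by rw [← mul_sum, sum_pow']
    _ ≤ T ^ k * ((T : ℝ) ^ (1 - s) / (1 - s)) ^ n := by
        gcongr
        exact (le_div_iff₀' (by linarith)).2 (one_sub_mul_sum_Icc_rpow_neg_le hs0 hs1.le T)
    _ = ((1 - s) ^ n)⁻¹ * T ^ n := by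
        rw [div_pow, ← pow_mul_rpow_one_sub_div_pow T.cast_nonneg (by omega : k ≤ n)]
        ring

theorem stmt_3 (n k : ℕ) (hn : 2 ≤ n) (hk1 : 1 ≤ k) (hkn : k ≤ n - 1) :
    ∃ C : ℝ, ∀ T : ℕ, 0 < T →
      ∑ a ∈ Fintype.piFinset (fun _ : Fin n => Finset.Icc 1 T),
        ((∑ i, (a i : ℝ)) / n) ^ k / (∏ i, (a i : ℝ)) ^ ((k : ℝ) / n) ≤
      C * (T : ℝ) ^ n :=
  stmt_3_general n k hkn
end

section
/- Let n ≥ 2 and k an integer with 1 ≤ k ≤ n-1. There exists a constant C(k,n) such that for all positive integers T, the expectation of L_T^k over the uniform distribution on G(T) is at most C(k,n), where L_T(a) = ((a₁+⋯+aₙ)/n)/(a₁⋯aₙ)^{1/n}. -/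
/-- The set of primitive vectors in `{1,...,T}^n`. -/
def GSet (n T : ℕ) : Finset (Fin n → ℕ) :=
  (Fintype.piFinset fun _ : Fin n => Finset.Icc 1 T).filter
    (fun a => Finset.univ.gcd a = 1)

/-- The ratio of the arithmetic to the geometric mean. -/
noncomputable def Lfun (n : ℕ) (a : Fin n → ℕ) : ℝ :=
  ((∑ i, (a i : ℝ)) / n) / (∏ i, (a i : ℝ)) ^ ((1 : ℝ) / n)

/-!
Every coordinate is at most `T`, so `L_T(a)^k ≤ T^k ∏ aᵢ^(-k/n)`. Summed over the whole cube
`{1,…,T}ⁿ` this product factorises as `(∑_{m ≤ T} m^(-k/n))ⁿ ≤ (T^(1-k/n) / (1-k/n))ⁿ`, so the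
total is at most `Tⁿ / (1-k/n)ⁿ`; here `k < n` is essential. On the other hand the vectors of the
cube divisible by some `d ≥ 2` number at most `Tⁿ ∑_{d ≥ 2} d⁻² ≤ (11/12) Tⁿ`, so `#G(T) ≥ Tⁿ/12`.
-/

open Finset Real

lemma mul_rpow_sub_one_le_rpow_sub_rpow {β x : ℝ} (hβ0 : 0 ≤ β) (hβ1 : β ≤ 1) (hx : 1 ≤ x) :
    β * x ^ (β - 1) ≤ x ^ β - (x - 1) ^ β := by
  have hx0 : 0 < x := by linarith
  have hbern := rpow_one_add_le_one_add_mul_self (s := -x⁻¹)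
    (by simpa using inv_le_one_of_one_le₀ hx) hβ0 hβ1
  have hfactor : (x - 1) ^ β = x ^ β * (1 + -x⁻¹) ^ β := by
    rw [← mul_rpow hx0.le (by simpa using inv_le_one_of_one_le₀ hx)]
    congr 1
    field_simp; ring
  have hpow : x ^ (β - 1) = x ^ β * x⁻¹ := by
    rw [rpow_sub_one hx0.ne', div_eq_mul_inv]
  rw [hfactor, hpow]
  nlinarith [rpow_pos_of_pos hx0 β]

lemma sum_Icc_rpow_sub_one_le {β : ℝ} (hβ0 : 0 < β) (hβ1 : β ≤ 1) (T : ℕ) :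
    ∑ m ∈ Icc 1 T, (m : ℝ) ^ (β - 1) ≤ (T : ℝ) ^ β / β := by
  rw [le_div_iff₀ hβ0]
  induction T with
  | zero => simp [zero_rpow hβ0.ne']
  | succ T ih =>
    have hstep := mul_rpow_sub_one_le_rpow_sub_rpow hβ0.le hβ1
      (x := (T + 1 : ℕ)) (by simp)
    rw [sum_Icc_succ_top (by omega), add_mul]
    push_cast at hstep ⊢
    rw [add_sub_cancel_right] at hstep
    linarith

lemma sum_Icc_two_inv_sq_le (T : ℕ) : ∑ d ∈ Icc 2 T, ((d : ℝ) ^ 2)⁻¹ ≤ 11 / 12 := by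
  calc ∑ d ∈ Icc 2 T, ((d : ℝ) ^ 2)⁻¹
      ≤ ∑ d ∈ insert 2 (Ioo 2 (T + 1)), ((d : ℝ) ^ 2)⁻¹ :=
        sum_le_sum_of_subset_of_nonneg
          (fun d hd => by simp only [mem_Icc] at hd; simp only [mem_insert, mem_Ioo]; omega)
          (fun _ _ _ => by positivity)
    _ ≤ (2 ^ 2 : ℝ)⁻¹ + ∑ d ∈ Ioo 2 (T + 1), ((d : ℝ) ^ 2)⁻¹ := by
        rw [sum_insert (by simp)]; norm_num
    _ ≤ (2 ^ 2 : ℝ)⁻¹ + 2 / (2 + 1) := by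
        gcongr; exact_mod_cast sum_Ioo_inv_sq_le 2 (T + 1)
    _ = 11 / 12 := by norm_num

def cube (n T : ℕ) : Finset (Fin n → ℕ) := Fintype.piFinset fun _ : Fin n => Icc 1 T

lemma card_filter_cube_forall_dvd (n T d : ℕ) :
    #{a ∈ cube n T | ∀ i, d ∣ a i} = (T / d) ^ n := by
  have hfilter : {a ∈ cube n T | ∀ i, d ∣ a i} =
      Fintype.piFinset fun _ : Fin n => {x ∈ Ioc 0 T | d ∣ x} := by
    ext a
    simp [cube, forall_and, Nat.one_le_iff_ne_zero, Nat.pos_iff_ne_zero]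
  rw [hfilter, Fintype.card_piFinset, Nat.Ioc_filter_dvd_card_eq_div]
  simp

lemma filter_cube_gcd_ne_one_subset {n : ℕ} (hn : n ≠ 0) (T : ℕ) :
    {a ∈ cube n T | univ.gcd a ≠ 1} ⊆
      (Icc 2 T).biUnion fun d => {a ∈ cube n T | ∀ i, d ∣ a i} := by
  intro a ha
  obtain ⟨hab, hgcd⟩ := mem_filter.mp ha
  have hdvd : ∀ i, univ.gcd a ∣ a i := fun i => gcd_dvd (mem_univ i)
  let i₀ : Fin n := ⟨0, Nat.pos_of_ne_zero hn⟩
  have ha₀ := mem_Icc.mp (Fintype.mem_piFinset.mp hab i₀)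
  have hle := Nat.le_of_dvd (by omega) (hdvd i₀)
  have hpos := Nat.pos_of_dvd_of_pos (hdvd i₀) (by omega)
  exact mem_biUnion.mpr ⟨_, mem_Icc.mpr ⟨by omega, by omega⟩, mem_filter.mpr ⟨hab, hdvd⟩⟩

lemma card_filter_cube_gcd_ne_one_le {n : ℕ} (hn : 2 ≤ n) (T : ℕ) :
    (#{a ∈ cube n T | univ.gcd a ≠ 1} : ℝ) ≤ 11 / 12 * (T : ℝ) ^ n := by
  calc (#{a ∈ cube n T | univ.gcd a ≠ 1} : ℝ)
      ≤ ∑ d ∈ Icc 2 T, (#{a ∈ cube n T | ∀ i, d ∣ a i} : ℝ) := by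
        exact_mod_cast
          (card_le_card (filter_cube_gcd_ne_one_subset (by omega) T)).trans card_biUnion_le
    _ ≤ ∑ d ∈ Icc 2 T, ((d : ℝ) ^ 2)⁻¹ * (T : ℝ) ^ n := by
        refine sum_le_sum fun d hd => ?_
        have hd1 : (1 : ℝ) ≤ d := by exact_mod_cast (mem_Icc.mp hd).1.trans' one_le_two
        rw [card_filter_cube_forall_dvd, Nat.cast_pow, inv_mul_eq_div]
        calc ((T / d : ℕ) : ℝ) ^ n ≤ ((T : ℝ) / d) ^ n := by gcongr; exact Nat.cast_div_le
          _ = (T : ℝ) ^ n / (d : ℝ) ^ n := div_pow _ _ _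
          _ ≤ (T : ℝ) ^ n / (d : ℝ) ^ 2 := by gcongr
    _ = (∑ d ∈ Icc 2 T, ((d : ℝ) ^ 2)⁻¹) * (T : ℝ) ^ n := (sum_mul ..).symm
    _ ≤ 11 / 12 * (T : ℝ) ^ n := by gcongr; exact sum_Icc_two_inv_sq_le T

lemma pow_le_mul_card_GSet {n : ℕ} (hn : 2 ≤ n) (T : ℕ) :
    (T : ℝ) ^ n ≤ 12 * #(GSet n T) := by
  have hsplit := card_filter_add_card_filter_not (s := cube n T) (fun a => univ.gcd a = 1)
  have hbox : #(cube n T) = T ^ n := by simp [cube]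
  rw [hbox] at hsplit
  have hcast : (#(GSet n T) : ℝ) + #{a ∈ cube n T | univ.gcd a ≠ 1} = (T : ℝ) ^ n := by
    exact_mod_cast hsplit
  linarith [card_filter_cube_gcd_ne_one_le hn T]

lemma sum_cube_prod (n T : ℕ) (f : ℕ → ℝ) :
    ∑ a ∈ cube n T, ∏ i, f (a i) = (∑ m ∈ Icc 1 T, f m) ^ n := by
  rw [cube, ← prod_univ_sum, prod_const, card_univ, Fintype.card_fin]

lemma Lfun_pow_le {n T : ℕ} (hn : n ≠ 0) (k : ℕ) {a : Fin n → ℕ} (ha : a ∈ cube n T) :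
    Lfun n a ^ k ≤ (T : ℝ) ^ k * ∏ i, (a i : ℝ) ^ (-(k / n : ℝ)) := by
  have ha' : ∀ i, 1 ≤ a i ∧ a i ≤ T := fun i => mem_Icc.mp (Fintype.mem_piFinset.mp ha i)
  have hpos : ∀ i, (0 : ℝ) < a i := fun i => by exact_mod_cast (ha' i).1
  have hprod : (0 : ℝ) < ∏ i, (a i : ℝ) := prod_pos fun i _ => hpos i
  have hmean : (∑ i, (a i : ℝ)) / n ≤ T := by
    rw [div_le_iff₀ (by positivity)]
    calc ∑ i, (a i : ℝ) ≤ ∑ _i : Fin n, (T : ℝ) :=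
          sum_le_sum fun i _ => by exact_mod_cast (ha' i).2
      _ = T * n := by simp [mul_comm]
  have hgeom : ((∏ i, (a i : ℝ)) ^ ((1 : ℝ) / n)) ^ k = ∏ i, (a i : ℝ) ^ (k / n : ℝ) := by
    rw [← rpow_natCast, ← rpow_mul hprod.le, ← finsetProd_rpow _ _ fun i _ => (hpos i).le]
    ring_nf
  rw [Lfun, div_pow, hgeom, div_eq_mul_inv, ← prod_inv_distrib]
  simp_rw [← rpow_neg (hpos _).le]
  exact mul_le_mul_of_nonneg_right (pow_le_pow_left₀ (by positivity) hmean k)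
    (prod_nonneg fun i _ => (rpow_pos_of_pos (hpos i) _).le)

lemma sum_cube_Lfun_pow_le {n k : ℕ} (hkn : k < n) (T : ℕ) :
    ∑ a ∈ cube n T, Lfun n a ^ k ≤ (T : ℝ) ^ n / (1 - k / n) ^ n := by
  have hn : (0 : ℝ) < n := by exact_mod_cast (Nat.zero_le k).trans_lt hkn
  set β : ℝ := 1 - k / n with hβ
  have hβ0 : 0 < β := by
    rw [hβ, sub_pos, div_lt_one hn]; exact_mod_cast hkn
  have hβ1 : β ≤ 1 := by rw [hβ]; linarith [show (0 : ℝ) ≤ k / n by positivity]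
  have hexp : (k : ℝ) + β * n = n := by rw [hβ]; field_simp; ring
  calc ∑ a ∈ cube n T, Lfun n a ^ k
      ≤ ∑ a ∈ cube n T, (T : ℝ) ^ k * ∏ i, (a i : ℝ) ^ (β - 1) :=
        sum_le_sum fun a ha => by
          rw [hβ, sub_sub_cancel_left]; exact Lfun_pow_le (by omega) k ha
    _ = (T : ℝ) ^ k * (∑ m ∈ Icc 1 T, (m : ℝ) ^ (β - 1)) ^ n := by
        rw [← mul_sum, sum_cube_prod n T fun m => (m : ℝ) ^ (β - 1)]
    _ ≤ (T : ℝ) ^ k * ((T : ℝ) ^ β / β) ^ n := by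
        gcongr
        exact sum_Icc_rpow_sub_one_le hβ0 hβ1 T
    _ = (T : ℝ) ^ n / β ^ n := by
        rw [div_pow, mul_div_assoc', ← rpow_natCast _ n, ← rpow_mul (Nat.cast_nonneg T),
          ← rpow_natCast (T : ℝ) k, ← rpow_add' (Nat.cast_nonneg T) (by rw [hexp]; exact hn.ne'),
          hexp, rpow_natCast]

theorem stmt_4_general (n k : ℕ) (hn : 2 ≤ n) (hkn : k ≤ n - 1) :
    ∃ C : ℝ, ∀ T : ℕ, 0 < T →
      ∑ a ∈ GSet n T, Lfun n a ^ k ≤ C * ((GSet n T).card : ℝ) := by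
  have hkn' : k < n := by omega
  refine ⟨12 / (1 - k / n) ^ n, fun T _ => ?_⟩
  have hβ : (0 : ℝ) < 1 - k / n := by
    rw [sub_pos, div_lt_one (by positivity)]; exact_mod_cast hkn'
  calc ∑ a ∈ GSet n T, Lfun n a ^ k
      ≤ ∑ a ∈ cube n T, Lfun n a ^ k :=
        sum_le_sum_of_subset_of_nonneg (filter_subset _ _) fun a _ _ => by
          unfold Lfun; positivity
    _ ≤ (T : ℝ) ^ n / (1 - k / n) ^ n := sum_cube_Lfun_pow_le hkn' T
    _ ≤ 12 / (1 - k / n) ^ n * #(GSet n T) := by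
        rw [div_mul_eq_mul_div]
        exact div_le_div_of_nonneg_right (pow_le_mul_card_GSet hn T) (pow_nonneg hβ.le n)

theorem stmt_4 (n k : ℕ) (hn : 2 ≤ n) (hk1 : 1 ≤ k) (hkn : k ≤ n - 1) :
    ∃ C : ℝ, ∀ T : ℕ, 0 < T →
      ∑ a ∈ GSet n T, Lfun n a ^ k ≤ C * ((GSet n T).card : ℝ) :=
  stmt_4_general n k hn hkn
end
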